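/- For every K ≥ 1, every n ≥ 1, and every parameter vector β : Fin K → ℝ with β k > 0 for all k, the Dirichlet–multinomial allocation probabilities sum to one: Σ_{z : Fin n → Fin K} (Γ(B)/Γ(B + n)) · ∏_{k ∈ Fin K} Γ(β k + n_k(z))/Γ(β k) = 1, where B = Σ_k β k. -/

import Mathlib

open Finset

/-- Number of indices `i` with `z i = k`. -/
def nk {n K : ℕ} (z : Fin n → Fin K) (k : Fin K) : ℕ :=
  (Finset.univ.filter (fun i => z i = k)).card

/-!
Since `Γ(x + m) / Γ(x)` is the rising factorial `x⁽ᵐ⁾`, the claim is the multinomial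
Vandermonde identity `∑_z ∏_k (β k)⁽ⁿₖ⁽ᶻ⁾⁾ = B⁽ⁿ⁾`. It follows by induction on `n`: prepending a
value `k₀` to `z` multiplies the product by `β k₀ + n_{k₀}(z)`, and these factors sum to `B + n`.
-/

theorem Real.Gamma_add_nat_div_Gamma_eq {x : ℝ} (hx : ∀ m : ℕ, x ≠ -m) (n : ℕ) :
    Real.Gamma (x + n) / Real.Gamma x = (ascPochhammer ℝ n).eval x := by
  induction n with
  | zero => simp [div_self (Real.Gamma_ne_zero hx)]
  | succ n ih =>
    have hxn : x + n ≠ 0 := fun h => hx n (by linarith)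
    rw [Nat.cast_succ, ← add_assoc, Real.Gamma_add_one hxn, mul_div_assoc, ih,
      ascPochhammer_succ_eval, mul_comm]

theorem Real.Gamma_add_nat_div_Gamma_eq_of_pos {x : ℝ} (hx : 0 < x) (n : ℕ) :
    Real.Gamma (x + n) / Real.Gamma x = (ascPochhammer ℝ n).eval x :=
  Real.Gamma_add_nat_div_Gamma_eq (fun m h => by linarith [h ▸ hx, m.cast_nonneg (α := ℝ)]) n

section Counts

variable {n K : ℕ}

theorem nk_cons (k₀ : Fin K) (z : Fin n → Fin K) (k : Fin K) :
    nk (Fin.cons k₀ z : Fin (n + 1) → Fin K) k = nk z k + if k₀ = k then 1 else 0 := by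
  simp only [nk, Fin.card_filter_univ_succ, Fin.cons_zero, Fin.cons_succ]
  split_ifs <;> simp [add_comm]

theorem sum_nk (z : Fin n → Fin K) : ∑ k, nk z k = n := by
  simpa [nk] using (card_eq_sum_card_fiberwise (f := z) (s := univ) (t := univ) (by simp)).symm

end Counts

section Pochhammer

variable {R : Type*} [CommSemiring R] {K : ℕ} (β : Fin K → R)

theorem prod_ascPochhammer_nk_cons {n : ℕ} (k₀ : Fin K) (z : Fin n → Fin K) :
    ∏ k, (ascPochhammer R (nk (Fin.cons k₀ z : Fin (n + 1) → Fin K) k)).eval (β k) =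
      (∏ k, (ascPochhammer R (nk z k)).eval (β k)) * (β k₀ + nk z k₀) := by
  have hfactor : ∀ k, (ascPochhammer R (nk (Fin.cons k₀ z : Fin (n + 1) → Fin K) k)).eval (β k) =
      (ascPochhammer R (nk z k)).eval (β k) * if k₀ = k then β k + nk z k else 1 := by
    intro k
    split_ifs with h <;> simp [nk_cons, h, ascPochhammer_succ_eval]
  simp only [hfactor, prod_mul_distrib, prod_ite_eq, mem_univ, if_true]

theorem sum_prod_ascPochhammer_nk (n : ℕ) :
    ∑ z : Fin n → Fin K, ∏ k, (ascPochhammer R (nk z k)).eval (β k) =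
      (ascPochhammer R n).eval (∑ k, β k) := by
  induction n with
  | zero => simp [nk]
  | succ n ih =>
    rw [← (Fin.consEquiv fun _ => Fin K).sum_comp, Fintype.sum_prod_type, sum_comm]
    change ∑ z : Fin n → Fin K, ∑ k₀, ∏ k,
      (ascPochhammer R (nk (Fin.cons k₀ z : Fin (n + 1) → Fin K) k)).eval (β k) = _
    simp only [prod_ascPochhammer_nk_cons, ← mul_sum, sum_add_distrib, ← Nat.cast_sum, sum_nk,
      ← sum_mul, ih, ascPochhammer_succ_eval]

end Pochhammer

theorem stmt_7_general (K n : ℕ) (hK : 1 ≤ K) (β : Fin K → ℝ)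
    (hβ : ∀ k, 0 < β k) :
    ∑ z : Fin n → Fin K,
      (Real.Gamma (∑ k, β k) / Real.Gamma ((∑ k, β k) + (n : ℝ))) *
        ∏ k : Fin K, Real.Gamma (β k + (nk z k : ℝ)) / Real.Gamma (β k) = 1 := by
  have : Nonempty (Fin K) := Fin.pos_iff_nonempty.mp hK
  have hB : 0 < ∑ k, β k := sum_pos (fun k _ => hβ k) univ_nonempty
  have hBn : Real.Gamma ((∑ k, β k) + n) ≠ 0 := (Real.Gamma_pos_of_pos (by positivity)).ne'
  simp only [Real.Gamma_add_nat_div_Gamma_eq_of_pos (hβ _), ← mul_sum, sum_prod_ascPochhammer_nk,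
    ← Real.Gamma_add_nat_div_Gamma_eq_of_pos hB]
  field_simp

theorem stmt_7 (K n : ℕ) (hK : 1 ≤ K) (hn : 1 ≤ n) (β : Fin K → ℝ)
    (hβ : ∀ k, 0 < β k) :
    ∑ z : Fin n → Fin K,
      (Real.Gamma (∑ k, β k) / Real.Gamma ((∑ k, β k) + (n : ℝ))) *
        ∏ k : Fin K, Real.Gamma (β k + (nk z k : ℝ)) / Real.Gamma (β k) = 1 :=
  stmt_7_general K n hK β hβ
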